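/- Under the assumptions of the previous statement, suppose for a fixed patch D and all k ∈ ℕ the predicted reduction pred^k (optimal value of the linearized trust-region subproblem with radius Δ₀2^{−k}) is bounded below by ε > 0 uniformly in k. Then the ratio ared^k / pred^k converges to 1 as k → ∞; in particular, for every σ ∈ (0,1) there exists k such that ared^k ≥ σ pred^k. -/
import Mathlib


open MeasureTheory Metric Filter Topology ENNReal

/-- Divergence of a vector field on `ℝ^d`. -/
noncomputable def vdiv {d : ℕ} (φ : EuclideanSpace ℝ (Fin d) → EuclideanSpace ℝ (Fin d))
    (x : EuclideanSpace ℝ (Fin d)) : ℝ :=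
  ∑ i, fderiv ℝ φ x (EuclideanSpace.single i 1) i

/-- The total variation of `w` in the open set `Ω`, defined by duality against
smooth compactly supported vector fields with values in the unit ball. -/
noncomputable def TVar {d : ℕ} (Ω : Set (EuclideanSpace ℝ (Fin d)))
    (w : EuclideanSpace ℝ (Fin d) → ℝ) : ℝ≥0∞ :=
  ⨆ φ ∈ {φ : EuclideanSpace ℝ (Fin d) → EuclideanSpace ℝ (Fin d) |
      ContDiff ℝ (⊤ : ℕ∞) φ ∧ HasCompactSupport φ ∧ tsupport φ ⊆ Ω ∧ ∀ x, ‖φ x‖ ≤ 1},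
    ENNReal.ofReal (∫ x in Ω, w x * vdiv φ x)

/-- If the predicted reductions along trust-region radii `Δ₀ 2^{-k}` are bounded below by
`ε > 0`, then `ared^k / pred^k → 1`; in particular for every `σ ∈ (0,1)` the sufficient
decrease condition `ared^k ≥ σ pred^k` eventually holds. -/
theorem stmt9 {d : ℕ} (Ω : Set (EuclideanSpace ℝ (Fin d))) (hΩm : MeasurableSet Ω)
    (hΩb : Bornology.IsBounded Ω) (W : Finset ℤ)
    (α L Δ₀ ε : ℝ) (hα : 0 < α) (hL : 0 < L) (hΔ₀ : 0 < Δ₀) (hε : 0 < ε)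
    (F : Lp ℝ 1 (volume.restrict Ω) → ℝ) (hdiff : Differentiable ℝ F)
    (hlip : ∀ u v : Lp ℝ 1 (volume.restrict Ω),
      (∀ᵐ x ∂(volume.restrict Ω), u x ∈ convexHull ℝ ((fun m : ℤ => (m : ℝ)) '' ↑W)) →
      (∀ᵐ x ∂(volume.restrict Ω), v x ∈ convexHull ℝ ((fun m : ℤ => (m : ℝ)) '' ↑W)) →
      ‖fderiv ℝ F u - fderiv ℝ F v‖ ≤ L * ‖u - v‖)
    (w : Lp ℝ 1 (volume.restrict Ω)) (wt : ℕ → Lp ℝ 1 (volume.restrict Ω))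
    (hw : ∀ᵐ x ∂(volume.restrict Ω), ∃ m ∈ W, w x = (m : ℝ))
    (hwt : ∀ k, ∀ᵐ x ∂(volume.restrict Ω), ∃ m ∈ W, wt k x = (m : ℝ))
    (hTVw : TVar Ω (⇑w) ≠ ⊤) (hTVwt : ∀ k, TVar Ω (⇑(wt k)) ≠ ⊤)
    (hrad : ∀ k : ℕ, ‖wt k - w‖ ≤ Δ₀ * 2 ^ (-(k : ℤ)))
    (pred ared : ℕ → ℝ)
    (hpred : ∀ k : ℕ, pred k = (fderiv ℝ F w) (w - wt k)
        + α * (TVar Ω (⇑w)).toReal - α * (TVar Ω (⇑(wt k))).toReal)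
    (hared : ∀ k : ℕ, ared k = F w - F (wt k)
        + α * (TVar Ω (⇑w)).toReal - α * (TVar Ω (⇑(wt k))).toReal)
    (hbelow : ∀ k : ℕ, ε ≤ pred k) :
    Filter.Tendsto (fun k => ared k / pred k) Filter.atTop (𝓝 1) ∧
    ∀ σ ∈ Set.Ioo (0 : ℝ) 1, ∃ k : ℕ, σ * pred k ≤ ared k := by
  -- a.e. membership in the convex hull for convex combinations of w and wt k
  have hmem : ∀ (u : Lp ℝ 1 (volume.restrict Ω)),
      (∀ᵐ x ∂(volume.restrict Ω), ∃ m ∈ W, u x = (m : ℝ)) →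
      ∀ᵐ x ∂(volume.restrict Ω), u x ∈ convexHull ℝ ((fun m : ℤ => (m : ℝ)) '' ↑W) := by
    intro u hu
    filter_upwards [hu] with x ⟨m, hm, hx⟩
    exact subset_convexHull ℝ _ ⟨m, hm, hx.symm⟩
  have hwm := hmem w hw
  -- key error bound
  have key : ∀ k : ℕ, |ared k - pred k| ≤ (L * ‖wt k - w‖) * ‖wt k - w‖ := by
    intro k
    have hseg : ∀ u ∈ segment ℝ w (wt k),
        ∀ᵐ x ∂(volume.restrict Ω), u x ∈ convexHull ℝ ((fun m : ℤ => (m : ℝ)) '' ↑W) := by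
      rintro u ⟨a, b, ha, hb, hab, rfl⟩
      filter_upwards [hmem w hw, hmem (wt k) (hwt k),
        Lp.coeFn_add (a • w) (b • wt k), Lp.coeFn_smul (a : ℝ) w,
        Lp.coeFn_smul (b : ℝ) (wt k)] with x h1 h2 h3 h4 h5
      rw [h3]
      simp only [Pi.add_apply, h4, h5, Pi.smul_apply, smul_eq_mul]
      exact (convex_convexHull ℝ _) h1 h2 ha hb hab
    have hbnd : ∀ u ∈ segment ℝ w (wt k),
        ‖fderiv ℝ F u - fderiv ℝ F w‖ ≤ L * ‖wt k - w‖ := by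
      rintro u hu
      have h1 := hlip u w (hseg u hu) hwm
      have h2 : ‖u - w‖ ≤ ‖wt k - w‖ := by
        obtain ⟨a, b, ha, hb, hab, rfl⟩ := hu
        have : a • w + b • wt k - w = b • (wt k - w) := by
          have : a = 1 - b := by linarith
          rw [this]; module
        rw [this, norm_smul, Real.norm_eq_abs, abs_of_nonneg hb]
        nlinarith [norm_nonneg (wt k - w)]
      calc ‖fderiv ℝ F u - fderiv ℝ F w‖ ≤ L * ‖u - w‖ := h1
        _ ≤ L * ‖wt k - w‖ := by nlinarith
    have hmv := (convex_segment w (wt k)).norm_image_sub_le_of_norm_fderiv_le'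
      (fun x _ => hdiff x) hbnd (left_mem_segment ℝ w (wt k))
      (right_mem_segment ℝ w (wt k))
    have heq : ared k - pred k = -(F (wt k) - F w - (fderiv ℝ F w) (wt k - w)) := by
      rw [hared k, hpred k]
      have : (fderiv ℝ F w) (w - wt k) = -((fderiv ℝ F w) (wt k - w)) := by
        rw [← map_neg]; congr 1; abel
      rw [this]; ring
    rw [heq, abs_neg, ← Real.norm_eq_abs]
    exact hmv
  have hpredpos : ∀ k, 0 < pred k := fun k => lt_of_lt_of_le hε (hbelow k)
  -- the ratio bound
  have hub : ∀ k : ℕ, ‖ared k / pred k - 1‖ ≤ (L * Δ₀ ^ 2 / ε) * (1 / 4 : ℝ) ^ k := by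
    intro k
    have hp := hpredpos k
    have h1 : ared k / pred k - 1 = (ared k - pred k) / pred k := by
      field_simp
    rw [h1, Real.norm_eq_abs, abs_div, abs_of_pos hp, div_le_iff₀ hp]
    have hr := hrad k
    have hr0 : (0:ℝ) ≤ ‖wt k - w‖ := norm_nonneg _
    have h2 : (L * ‖wt k - w‖) * ‖wt k - w‖ ≤ L * (Δ₀ * 2 ^ (-(k:ℤ)))^2 := by
      have := mul_le_mul hr hr hr0 (by positivity : (0:ℝ) ≤ Δ₀ * 2 ^ (-(k:ℤ)))
      nlinarith
    have h3 : L * (Δ₀ * 2 ^ (-(k:ℤ)))^2 = (L * Δ₀ ^ 2) * (1/4 : ℝ) ^ k := by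
      have e : (2:ℝ) ^ (-(k:ℤ)) = (1/2:ℝ) ^ k := by
        rw [zpow_neg, zpow_natCast, one_div, inv_pow]
      have e2 : ((1/2:ℝ) ^ k) ^ 2 = (1/4:ℝ) ^ k := by
        rw [← pow_mul, mul_comm, pow_mul]; norm_num
      rw [e, mul_pow, e2]; ring
    have h4 : (L * Δ₀ ^ 2) * (1/4 : ℝ) ^ k ≤ (L * Δ₀ ^ 2 / ε) * (1/4 : ℝ) ^ k * pred k := by
      have h5 : ε ≤ pred k := hbelow k
      have h6 : (0:ℝ) < (1/4 : ℝ) ^ k := by positivity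
      have h7 : (0:ℝ) < L * Δ₀ ^ 2 := by positivity
      rw [div_mul_eq_mul_div, div_mul_eq_mul_div, le_div_iff₀ hε]
      exact mul_le_mul_of_nonneg_left h5 (by positivity)
    calc |ared k - pred k| ≤ (L * ‖wt k - w‖) * ‖wt k - w‖ := key k
      _ ≤ L * (Δ₀ * 2 ^ (-(k:ℤ)))^2 := h2
      _ = (L * Δ₀ ^ 2) * (1/4 : ℝ) ^ k := h3
      _ ≤ _ := h4
  have hzero : Filter.Tendsto (fun k => ared k / pred k - 1) Filter.atTop (𝓝 0) := by
    apply squeeze_zero_norm hub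
    have : Filter.Tendsto (fun k : ℕ => (1/4 : ℝ) ^ k) Filter.atTop (𝓝 0) :=
      tendsto_pow_atTop_nhds_zero_of_lt_one (by norm_num) (by norm_num)
    have := this.const_mul (L * Δ₀ ^ 2 / ε)
    simpa using this
  have htend : Filter.Tendsto (fun k => ared k / pred k) Filter.atTop (𝓝 1) := by
    have := hzero.add_const 1
    simpa using this
  refine ⟨htend, ?_⟩
  intro σ hσ
  have : ∀ᶠ k in Filter.atTop, σ < ared k / pred k :=
    htend.eventually (eventually_gt_nhds hσ.2)
  obtain ⟨k, hk⟩ := this.exists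
  exact ⟨k, (le_div_iff₀ (hpredpos k)).mp hk.le⟩
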